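/- For the sigmoid loss φ(α) = 1 − tanh(α), the ψ-transform satisfies ψ(θ) = θ for all θ ∈ [0,1]. -/

import Mathlib

open Set

/-- The conditional `φ`-risk `C_η(α) = η φ(α) + (1-η) φ(-α)`. -/
noncomputable def condRisk (φ : ℝ → ℝ) (η α : ℝ) : ℝ := η * φ α + (1 - η) * φ (-α)

/-- `H(η) = inf_α C_η(α)`. -/
noncomputable def Hopt (φ : ℝ → ℝ) (η : ℝ) : ℝ := ⨅ α : ℝ, condRisk φ η α

/-- `H⁻(η)`, the infimum of `C_η(α)` over `α` with `α (2η - 1) ≤ 0`. -/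
noncomputable def Hneg (φ : ℝ → ℝ) (η : ℝ) : ℝ :=
  ⨅ α : {a : ℝ // a * (2 * η - 1) ≤ 0}, condRisk φ η α.1

/-- `ψ̃(θ) = H⁻((1+θ)/2) − H((1+θ)/2)`. -/
noncomputable def psiTilde (φ : ℝ → ℝ) (θ : ℝ) : ℝ :=
  Hneg φ ((1 + θ) / 2) - Hopt φ ((1 + θ) / 2)

/-- The `ψ`-transform: the largest convex lower bound (biconjugate) of `ψ̃` on `[0,1]`. -/
noncomputable def psiT (φ : ℝ → ℝ) (θ : ℝ) : ℝ :=
  sSup {y : ℝ | ∃ g : ℝ → ℝ, ConvexOn ℝ (Icc 0 1) g ∧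
    (∀ t ∈ Icc (0:ℝ) 1, g t ≤ psiTilde φ t) ∧ y = g θ}

/-- `φ` is classification-calibrated: for every `η ≠ 1/2`, `H⁻(η) > H(η)`. -/
def ClassificationCalibrated (φ : ℝ → ℝ) : Prop :=
  ∀ η ∈ Icc (0:ℝ) 1, η ≠ 1 / 2 → Hopt φ η < Hneg φ η

open Real

/-!
For `φ = 1 - f` with `f` odd, the conditional risk is `C_η(α) = 1 - (2η - 1) f(α)`. At
`η = (1 + θ)/2` with `θ ≥ 0` this is `1 - θ f(α)`, so `H = 1 - θ · sup f`, while on the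
half-line `α ≤ 0` forced by `H⁻` a nonpositive `f` keeps the risk at least its value `1`
at `α = 0`. For `f = tanh` (with `sup tanh = 1`) this gives `ψ̃(θ) = θ`, which is already
convex, hence equal to its biconjugate.
-/

theorem psiT_eq_psiTilde_of_convexOn {φ : ℝ → ℝ} (hconv : ConvexOn ℝ (Icc 0 1) (psiTilde φ))
    {θ : ℝ} (hθ : θ ∈ Icc (0:ℝ) 1) : psiT φ θ = psiTilde φ θ :=
  IsGreatest.csSup_eq ⟨⟨psiTilde φ, hconv, fun _ _ => le_rfl, rfl⟩,
    by rintro _ ⟨g, -, hg, rfl⟩; exact hg θ hθ⟩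

section OddLoss

variable {f : ℝ → ℝ}

theorem condRisk_one_sub_of_odd (hf : f.Odd) (θ α : ℝ) :
    condRisk (fun α => 1 - f α) ((1 + θ) / 2) α = 1 - θ * f α := by
  simp only [condRisk, hf.eq]
  ring

theorem Hopt_one_sub_of_odd (hf : f.Odd) (hbdd : BddAbove (range f)) {θ : ℝ} (hθ : 0 ≤ θ) :
    Hopt (fun α => 1 - f α) ((1 + θ) / 2) = 1 - θ * ⨆ α, f α := by
  have hanti : Antitone fun t : ℝ => 1 - θ * t := fun _ _ hst => by
    have := mul_le_mul_of_nonneg_left hst hθ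
    linarith
  rw [Hopt, hanti.map_ciSup_of_continuousAt (by fun_prop) hbdd]
  simp only [condRisk_one_sub_of_odd hf]

theorem Hneg_one_sub_of_odd (hf : f.Odd) (hnonpos : ∀ x ≤ 0, f x ≤ 0) {θ : ℝ} (hθ : 0 ≤ θ) :
    Hneg (fun α => 1 - f α) ((1 + θ) / 2) = 1 := by
  have hη : 2 * ((1 + θ) / 2) - 1 = θ := by ring
  have hzero : (0:ℝ) * (2 * ((1 + θ) / 2) - 1) ≤ 0 := by simp
  have hle : ∀ α : {a : ℝ // a * (2 * ((1 + θ) / 2) - 1) ≤ 0},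
      1 ≤ condRisk (fun α => 1 - f α) ((1 + θ) / 2) α.1 := by
    rintro ⟨a, ha⟩
    rw [hη] at ha
    rw [condRisk_one_sub_of_odd hf]
    rcases hθ.eq_or_lt with rfl | hθpos
    · simp
    · have := mul_nonpos_of_nonneg_of_nonpos hθ (hnonpos a (nonpos_of_mul_nonpos_left ha hθpos))
      linarith
  have : Nonempty {a : ℝ // a * (2 * ((1 + θ) / 2) - 1) ≤ 0} := ⟨⟨0, hzero⟩⟩
  rw [Hneg]
  refine le_antisymm ((ciInf_le ⟨1, ?_⟩ ⟨0, hzero⟩).trans_eq ?_) (le_ciInf hle)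
  · rintro _ ⟨α, rfl⟩
    exact hle α
  · rw [condRisk_one_sub_of_odd hf, hf.map_zero, mul_zero, sub_zero]

theorem psiTilde_one_sub_of_odd (hf : f.Odd) (hbdd : BddAbove (range f))
    (hnonpos : ∀ x ≤ 0, f x ≤ 0) {θ : ℝ} (hθ : 0 ≤ θ) :
    psiTilde (fun α => 1 - f α) θ = θ * ⨆ α, f α := by
  rw [psiTilde, Hneg_one_sub_of_odd hf hnonpos hθ, Hopt_one_sub_of_odd hf hbdd hθ]
  ring

end OddLoss

namespace Real

theorem tanh_odd : Function.Odd tanh := tanh_neg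

theorem range_tanh : range tanh = Ioo (-1) 1 := by
  rw [← image_univ, tanh_bijOn.image_eq]

theorem iSup_tanh : ⨆ x, tanh x = 1 := by
  rw [iSup, range_tanh, csSup_Ioo (by norm_num)]

theorem tanh_nonpos {x : ℝ} (hx : x ≤ 0) : tanh x ≤ 0 := by
  rw [tanh_eq_sinh_div_cosh]
  exact div_nonpos_of_nonpos_of_nonneg (sinh_nonpos_iff.2 hx) (cosh_pos x).le

end Real

theorem psiTilde_sigmoid {θ : ℝ} (hθ : 0 ≤ θ) : psiTilde (fun α => 1 - tanh α) θ = θ := by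
  rw [psiTilde_one_sub_of_odd tanh_odd (by rw [range_tanh]; exact bddAbove_Ioo)
    (fun _ => tanh_nonpos) hθ, iSup_tanh, mul_one]

/-- For the sigmoid loss `φ(α) = 1 - tanh α`, the `ψ`-transform is `ψ(θ) = θ` on `[0,1]`. -/
theorem psi_transform_sigmoid :
    ∀ θ ∈ Icc (0:ℝ) 1, psiT (fun α => 1 - Real.tanh α) θ = θ := by
  have hψ : EqOn id (psiTilde fun α => 1 - tanh α) (Icc 0 1) :=
    fun θ hθ => (psiTilde_sigmoid hθ.1).symm
  intro θ hθ
  rw [psiT_eq_psiTilde_of_convexOn ((convexOn_id (convex_Icc 0 1)).congr hψ) hθ]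
  exact psiTilde_sigmoid hθ.1
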